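/- arXiv:2212.13383 — 2 statements merged into one kernel-verified Lean document; each statement's English description precedes it below -/
import Mathlib

section
/- (Marginals, Case 3.) Suppose θ₁+θ₂ ≠ θ₁′ and θ₁+θ₂ = θ₂′. Then for every y₁ ∈ (a,b), the marginal CDF F_{Y₁}(y₁) = ∫_a^{y₁} ∫_a^b f(u,v) dv du equals (θ₂/(θ₁+θ₂−θ₁′))·F₀(y₁)^{θ₁′} + ((θ₁−θ₁′)/(θ₁+θ₂−θ₁′))·F₀(y₁)^{θ₁+θ₂}, and for every y₂ ∈ (a,b), the marginal CDF F_{Y₂}(y₂) = ∫_a^b ∫_a^{y₂} f(u,v) dv du equals F₀(y₂)^{θ₁+θ₂}·[1 − θ₁ ln(F₀(y₂))]. -/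
/-!
With `θ₂' = θ₁ + θ₂` the density is, on each side of the diagonal, a product of factors
`f₀ F₀ ^ (p - 1) = (F₀ ^ p / p)'` and, for the exponent `p = 0` left over on `{v < u}`,
`f₀ / F₀ = (log F₀)'`. Every integral in sight is thus the integral of a nonnegative derivative
over an open interval; such a derivative is automatically integrable, and the fundamental theorem
of calculus evaluates it from the limits `F₀ → 0` at `a` and `F₀ → 1` at `b`. The logarithm in
the second marginal comes from the strip `y₂ < u`, where the inner integral is
`θ₁ F₀(y₂) ^ (θ₁ + θ₂) f₀(u) / F₀(u)`.
-/

open MeasureTheory Set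

noncomputable def dprh (a b : ℝ) (F₀ f₀ : ℝ → ℝ) (θ₁ θ₂ θ₁' θ₂' : ℝ) (y₁ y₂ : ℝ) : ℝ :=
  if a < y₁ ∧ y₁ < y₂ ∧ y₂ < b then
    θ₁' * θ₂ * f₀ y₁ * f₀ y₂ * F₀ y₁ ^ (θ₁' - 1) * F₀ y₂ ^ (θ₁ + θ₂ - θ₁' - 1)
  else if a < y₂ ∧ y₂ < y₁ ∧ y₁ < b then
    θ₁ * θ₂' * f₀ y₁ * f₀ y₂ * F₀ y₁ ^ (θ₁ + θ₂ - θ₂' - 1) * F₀ y₂ ^ (θ₂' - 1)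
  else 0

open Filter Topology Real

theorem intervalIntegrable_deriv_of_nonneg_of_tendsto {f f' : ℝ → ℝ} {a b fa fb : ℝ}
    (hab : a < b) (hderiv : ∀ x ∈ Ioo a b, HasDerivAt f (f' x) x)
    (hf' : ∀ x ∈ Ioo a b, 0 ≤ f' x) (ha : Tendsto f (𝓝[>] a) (𝓝 fa))
    (hb : Tendsto f (𝓝[<] b) (𝓝 fb)) :
    IntervalIntegrable f' volume a b := by
  have hcont : ContinuousOn f (Ioo a b) := fun x hx =>
    (hderiv x hx).continuousAt.continuousWithinAt
  refine (intervalIntegrable_iff_integrableOn_Ioc_of_le hab.le).2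
    (intervalIntegral.integrableOn_deriv_of_nonneg (continuousOn_Icc_extendFrom_Ioo hcont ha hb)
      (fun x hx => (hderiv x hx).congr_of_eventuallyEq ?_) hf')
  filter_upwards [Ioo_mem_nhds hx.1 hx.2] with y hy using extendFrom_extends hcont y hy

theorem integral_mul_rpow_sub_one_of_tendsto {F f : ℝ → ℝ} {c d Fc Fd p : ℝ} (hcd : c < d)
    (hF : ∀ x ∈ Ioo c d, HasDerivAt F (f x) x) (hf : ∀ x ∈ Ioo c d, 0 ≤ f x)
    (hFpos : ∀ x ∈ Ioo c d, 0 < F x) (hc : Tendsto F (𝓝[>] c) (𝓝 Fc))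
    (hd : Tendsto F (𝓝[<] d) (𝓝 Fd)) (hp : p ≠ 0) (hcp : Fc ≠ 0 ∨ 0 < p)
    (hdp : Fd ≠ 0 ∨ 0 < p) :
    IntervalIntegrable (fun x => f x * F x ^ (p - 1)) volume c d ∧
      ∫ x in c..d, f x * F x ^ (p - 1) = (Fd ^ p - Fc ^ p) / p := by
  have hderiv : ∀ x ∈ Ioo c d, HasDerivAt (fun x => F x ^ p / p) (f x * F x ^ (p - 1)) x := by
    intro x hx
    refine (((hF x hx).rpow_const (Or.inl (hFpos x hx).ne')).div_const p).congr_deriv ?_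
    field_simp
  have hlim {l : Filter ℝ} {L : ℝ} (hL : L ≠ 0 ∨ 0 < p) (h : Tendsto F l (𝓝 L)) :
      Tendsto (fun x => F x ^ p / p) l (𝓝 (L ^ p / p)) :=
    (h.rpow_const (hL.imp_right le_of_lt)).div_const p
  have hint := intervalIntegrable_deriv_of_nonneg_of_tendsto hcd hderiv
    (fun x hx => mul_nonneg (hf x hx) (rpow_nonneg (hFpos x hx).le _)) (hlim hcp hc) (hlim hdp hd)
  refine ⟨hint, ?_⟩
  rw [intervalIntegral.integral_eq_sub_of_hasDerivAt_of_tendsto hcd hderiv hint (hlim hcp hc)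
    (hlim hdp hd)]
  ring

theorem integral_div_of_tendsto {F f : ℝ → ℝ} {c d Fc Fd : ℝ} (hcd : c < d)
    (hF : ∀ x ∈ Ioo c d, HasDerivAt F (f x) x) (hf : ∀ x ∈ Ioo c d, 0 ≤ f x)
    (hFpos : ∀ x ∈ Ioo c d, 0 < F x) (hc : Tendsto F (𝓝[>] c) (𝓝 Fc))
    (hd : Tendsto F (𝓝[<] d) (𝓝 Fd)) (hFc : Fc ≠ 0) (hFd : Fd ≠ 0) :
    IntervalIntegrable (fun x => f x / F x) volume c d ∧
      ∫ x in c..d, f x / F x = log Fd - log Fc := by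
  have hderiv : ∀ x ∈ Ioo c d, HasDerivAt (fun x => log (F x)) (f x / F x) x :=
    fun x hx => (hF x hx).log (hFpos x hx).ne'
  have hint := intervalIntegrable_deriv_of_nonneg_of_tendsto hcd hderiv
    (fun x hx => div_nonneg (hf x hx) (hFpos x hx).le) (hc.log hFc) (hd.log hFd)
  exact ⟨hint, intervalIntegral.integral_eq_sub_of_hasDerivAt_of_tendsto hcd hderiv hint
    (hc.log hFc) (hd.log hFd)⟩

section DPRH

variable {a b : ℝ} {F₀ f₀ : ℝ → ℝ} {θ₁ θ₂ θ₁' θ₂' : ℝ}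

theorem dprh_of_lt {u v : ℝ} (hu : a < u) (huv : u < v) (hv : v < b) :
    dprh a b F₀ f₀ θ₁ θ₂ θ₁' θ₂' u v =
      θ₁' * θ₂ * f₀ u * F₀ u ^ (θ₁' - 1) * (f₀ v * F₀ v ^ (θ₁ + θ₂ - θ₁' - 1)) := by
  rw [dprh, if_pos ⟨hu, huv, hv⟩]
  ring

theorem dprh_of_gt {u v : ℝ} (hv : a < v) (hvu : v < u) (hu : u < b) :
    dprh a b F₀ f₀ θ₁ θ₂ θ₁' θ₂' u v =
      θ₁ * θ₂' * f₀ u * F₀ u ^ (θ₁ + θ₂ - θ₂' - 1) * (f₀ v * F₀ v ^ (θ₂' - 1)) := by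
  rw [dprh, if_neg fun h => lt_asymm h.2.1 hvu, if_pos ⟨hv, hvu, hu⟩]
  ring

theorem integral_mul_rpow_sub_one_of_tendsto_zero
    (hderiv : ∀ y ∈ Ioo a b, HasDerivAt F₀ (f₀ y) y) (hf₀ : ∀ y ∈ Ioo a b, 0 ≤ f₀ y)
    (hF₀pos : ∀ y ∈ Ioo a b, 0 < F₀ y) (hFa : Tendsto F₀ (𝓝[>] a) (𝓝 0))
    {p y : ℝ} (hp : 0 < p) (hy : y ∈ Ioo a b) :
    IntervalIntegrable (fun x => f₀ x * F₀ x ^ (p - 1)) volume a y ∧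
      ∫ x in a..y, f₀ x * F₀ x ^ (p - 1) = F₀ y ^ p / p := by
  have hsub : Ioo a y ⊆ Ioo a b := Ioo_subset_Ioo_right hy.2.le
  obtain ⟨hint, hval⟩ := integral_mul_rpow_sub_one_of_tendsto hy.1
    (fun x hx => hderiv x (hsub hx)) (fun x hx => hf₀ x (hsub hx))
    (fun x hx => hF₀pos x (hsub hx)) hFa (hderiv y hy).continuousAt.continuousWithinAt
    hp.ne' (Or.inr hp) (Or.inr hp)
  refine ⟨hint, ?_⟩
  rw [hval, zero_rpow hp.ne', sub_zero]

theorem integral_dprh_of_le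
    (hderiv : ∀ y ∈ Ioo a b, HasDerivAt F₀ (f₀ y) y) (hf₀ : ∀ y ∈ Ioo a b, 0 ≤ f₀ y)
    (hF₀pos : ∀ y ∈ Ioo a b, 0 < F₀ y) (hFa : Tendsto F₀ (𝓝[>] a) (𝓝 0)) (hθ₂' : 0 < θ₂')
    {u w : ℝ} (hw : a < w) (hwu : w ≤ u) (hu : u < b) :
    IntervalIntegrable (dprh a b F₀ f₀ θ₁ θ₂ θ₁' θ₂' u) volume a w ∧
      ∫ v in a..w, dprh a b F₀ f₀ θ₁ θ₂ θ₁' θ₂' u v =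
        θ₁ * F₀ w ^ θ₂' * (f₀ u * F₀ u ^ (θ₁ + θ₂ - θ₂' - 1)) := by
  obtain ⟨hint, hval⟩ := integral_mul_rpow_sub_one_of_tendsto_zero hderiv hf₀ hF₀pos hFa hθ₂'
    ⟨hw, hwu.trans_lt hu⟩
  have heq : EqOn (dprh a b F₀ f₀ θ₁ θ₂ θ₁' θ₂' u)
      (fun v => θ₁ * θ₂' * f₀ u * F₀ u ^ (θ₁ + θ₂ - θ₂' - 1) * (f₀ v * F₀ v ^ (θ₂' - 1)))
      (Ioo a w) := fun v hv => dprh_of_gt hv.1 (hv.2.trans_le hwu) hu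
  refine ⟨(intervalIntegrable_congr_uIoo (uIoo_of_le hw.le ▸ heq)).2 (hint.const_mul _), ?_⟩
  rw [intervalIntegral.integral_congr_Ioo_of_le hw.le heq, intervalIntegral.integral_const_mul,
    hval]
  field_simp

theorem integral_dprh_of_lt
    (hderiv : ∀ y ∈ Ioo a b, HasDerivAt F₀ (f₀ y) y) (hf₀ : ∀ y ∈ Ioo a b, 0 ≤ f₀ y)
    (hF₀pos : ∀ y ∈ Ioo a b, 0 < F₀ y) (hθ : θ₁ + θ₂ ≠ θ₁')
    {u w Fw : ℝ} (hu : a < u) (huw : u < w) (hwb : w ≤ b) (hw : Tendsto F₀ (𝓝[<] w) (𝓝 Fw))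
    (hFw : Fw ≠ 0) :
    IntervalIntegrable (dprh a b F₀ f₀ θ₁ θ₂ θ₁' θ₂' u) volume u w ∧
      ∫ v in u..w, dprh a b F₀ f₀ θ₁ θ₂ θ₁' θ₂' u v =
        θ₁' * θ₂ / (θ₁ + θ₂ - θ₁') * (f₀ u * F₀ u ^ (θ₁' - 1)) *
          (Fw ^ (θ₁ + θ₂ - θ₁') - F₀ u ^ (θ₁ + θ₂ - θ₁')) := by
  have hub : u ∈ Ioo a b := ⟨hu, huw.trans_le hwb⟩
  have hsub : Ioo u w ⊆ Ioo a b := Ioo_subset_Ioo hu.le hwb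
  obtain ⟨hint, hval⟩ := integral_mul_rpow_sub_one_of_tendsto huw
    (fun x hx => hderiv x (hsub hx)) (fun x hx => hf₀ x (hsub hx))
    (fun x hx => hF₀pos x (hsub hx)) (hderiv u hub).continuousAt.continuousWithinAt hw
    (sub_ne_zero.2 hθ) (Or.inl (hF₀pos u hub).ne') (Or.inl hFw)
  have heq : EqOn (dprh a b F₀ f₀ θ₁ θ₂ θ₁' θ₂' u)
      (fun v => θ₁' * θ₂ * f₀ u * F₀ u ^ (θ₁' - 1) * (f₀ v * F₀ v ^ (θ₁ + θ₂ - θ₁' - 1)))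
      (Ioo u w) := fun v hv => dprh_of_lt hu hv.1 (hv.2.trans_le hwb)
  refine ⟨(intervalIntegrable_congr_uIoo (uIoo_of_le huw.le ▸ heq)).2 (hint.const_mul _), ?_⟩
  rw [intervalIntegral.integral_congr_Ioo_of_le huw.le heq, intervalIntegral.integral_const_mul,
    hval]
  ring

theorem integral_dprh_add_of_lt
    (hderiv : ∀ y ∈ Ioo a b, HasDerivAt F₀ (f₀ y) y) (hf₀ : ∀ y ∈ Ioo a b, 0 ≤ f₀ y)
    (hF₀pos : ∀ y ∈ Ioo a b, 0 < F₀ y) (hFa : Tendsto F₀ (𝓝[>] a) (𝓝 0))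
    (hs : 0 < θ₁ + θ₂) (hθ : θ₁ + θ₂ ≠ θ₁')
    {u w Fw : ℝ} (hu : a < u) (huw : u < w) (hwb : w ≤ b) (hw : Tendsto F₀ (𝓝[<] w) (𝓝 Fw))
    (hFw : Fw ≠ 0) :
    ∫ v in a..w, dprh a b F₀ f₀ θ₁ θ₂ θ₁' (θ₁ + θ₂) u v =
      (θ₁ - θ₁' * θ₂ / (θ₁ + θ₂ - θ₁')) * (f₀ u * F₀ u ^ (θ₁ + θ₂ - 1)) +
        θ₁' * θ₂ / (θ₁ + θ₂ - θ₁') * Fw ^ (θ₁ + θ₂ - θ₁') * (f₀ u * F₀ u ^ (θ₁' - 1)) := by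
  have hFu := hF₀pos u ⟨hu, huw.trans_le hwb⟩
  obtain ⟨hint₁, hval₁⟩ := integral_dprh_of_le hderiv hf₀ hF₀pos hFa hs hu
    le_rfl (huw.trans_le hwb)
  obtain ⟨hint₂, hval₂⟩ := integral_dprh_of_lt hderiv hf₀ hF₀pos hθ hu huw hwb
    hw hFw
  have hrpow₁ : F₀ u ^ (θ₁ + θ₂) * F₀ u ^ (θ₁ + θ₂ - (θ₁ + θ₂) - 1) = F₀ u ^ (θ₁ + θ₂ - 1) := by
    rw [← rpow_add hFu]; ring_nf
  have hrpow₂ : F₀ u ^ (θ₁' - 1) * F₀ u ^ (θ₁ + θ₂ - θ₁') = F₀ u ^ (θ₁ + θ₂ - 1) := by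
    rw [← rpow_add hFu]; ring_nf
  rw [← intervalIntegral.integral_add_adjacent_intervals hint₁ hint₂, hval₁, hval₂]
  linear_combination θ₁ * f₀ u * hrpow₁ - θ₁' * θ₂ / (θ₁ + θ₂ - θ₁') * f₀ u * hrpow₂

theorem dprh_marginal_fst
    (hderiv : ∀ y ∈ Ioo a b, HasDerivAt F₀ (f₀ y) y) (hf₀ : ∀ y ∈ Ioo a b, 0 ≤ f₀ y)
    (hF₀pos : ∀ y ∈ Ioo a b, 0 < F₀ y) (hFa : Tendsto F₀ (𝓝[>] a) (𝓝 0))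
    (hFb : Tendsto F₀ (𝓝[<] b) (𝓝 1)) (hθ₁' : 0 < θ₁') (hs : 0 < θ₁ + θ₂)
    (hθ : θ₁ + θ₂ ≠ θ₁') {y : ℝ} (hy : y ∈ Ioo a b) :
    ∫ u in a..y, ∫ v in a..b, dprh a b F₀ f₀ θ₁ θ₂ θ₁' (θ₁ + θ₂) u v =
      θ₂ / (θ₁ + θ₂ - θ₁') * F₀ y ^ θ₁' + (θ₁ - θ₁') / (θ₁ + θ₂ - θ₁') * F₀ y ^ (θ₁ + θ₂) := by
  set κ := θ₁' * θ₂ / (θ₁ + θ₂ - θ₁')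
  have heq : EqOn (fun u => ∫ v in a..b, dprh a b F₀ f₀ θ₁ θ₂ θ₁' (θ₁ + θ₂) u v)
      (fun u => (θ₁ - κ) * (f₀ u * F₀ u ^ (θ₁ + θ₂ - 1)) + κ * (f₀ u * F₀ u ^ (θ₁' - 1)))
      (Ioo a y) := fun u hu => by
    simpa only [one_rpow, mul_one] using integral_dprh_add_of_lt hderiv hf₀ hF₀pos hFa hs hθ
      hu.1 (hu.2.trans hy.2) le_rfl hFb one_ne_zero
  obtain ⟨hint₁, hval₁⟩ := integral_mul_rpow_sub_one_of_tendsto_zero hderiv hf₀ hF₀pos hFa hs hy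
  obtain ⟨hint₂, hval₂⟩ :=
    integral_mul_rpow_sub_one_of_tendsto_zero hderiv hf₀ hF₀pos hFa hθ₁' hy
  rw [intervalIntegral.integral_congr_Ioo_of_le hy.1.le heq,
    intervalIntegral.integral_add (hint₁.const_mul _) (hint₂.const_mul _),
    intervalIntegral.integral_const_mul, intervalIntegral.integral_const_mul, hval₁, hval₂]
  have hden : θ₁ + θ₂ - θ₁' ≠ 0 := sub_ne_zero.2 hθ
  simp only [κ]
  field_simp
  ring

theorem integral_integral_dprh_square
    (hderiv : ∀ y ∈ Ioo a b, HasDerivAt F₀ (f₀ y) y) (hf₀ : ∀ y ∈ Ioo a b, 0 ≤ f₀ y)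
    (hF₀pos : ∀ y ∈ Ioo a b, 0 < F₀ y) (hFa : Tendsto F₀ (𝓝[>] a) (𝓝 0))
    (hθ₁' : 0 < θ₁') (hs : 0 < θ₁ + θ₂) (hθ : θ₁ + θ₂ ≠ θ₁') {y : ℝ} (hy : y ∈ Ioo a b) :
    IntervalIntegrable (fun u => ∫ v in a..y, dprh a b F₀ f₀ θ₁ θ₂ θ₁' (θ₁ + θ₂) u v) volume a y ∧
      ∫ u in a..y, ∫ v in a..y, dprh a b F₀ f₀ θ₁ θ₂ θ₁' (θ₁ + θ₂) u v = F₀ y ^ (θ₁ + θ₂) := by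
  set κ := θ₁' * θ₂ / (θ₁ + θ₂ - θ₁')
  have heq : EqOn (fun u => ∫ v in a..y, dprh a b F₀ f₀ θ₁ θ₂ θ₁' (θ₁ + θ₂) u v)
      (fun u => (θ₁ - κ) * (f₀ u * F₀ u ^ (θ₁ + θ₂ - 1)) +
        κ * F₀ y ^ (θ₁ + θ₂ - θ₁') * (f₀ u * F₀ u ^ (θ₁' - 1)))
      (Ioo a y) := fun u hu =>
    integral_dprh_add_of_lt hderiv hf₀ hF₀pos hFa hs hθ hu.1 hu.2 hy.2.le
      (hderiv y hy).continuousAt.continuousWithinAt (hF₀pos y hy).ne'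
  obtain ⟨hint₁, hval₁⟩ := integral_mul_rpow_sub_one_of_tendsto_zero hderiv hf₀ hF₀pos hFa hs hy
  obtain ⟨hint₂, hval₂⟩ :=
    integral_mul_rpow_sub_one_of_tendsto_zero hderiv hf₀ hF₀pos hFa hθ₁' hy
  have hint := (hint₁.const_mul (θ₁ - κ)).add (hint₂.const_mul (κ * F₀ y ^ (θ₁ + θ₂ - θ₁')))
  refine ⟨(intervalIntegrable_congr_uIoo (uIoo_of_le hy.1.le ▸ heq)).2 hint, ?_⟩
  have hrpow : F₀ y ^ (θ₁ + θ₂ - θ₁') * F₀ y ^ θ₁' = F₀ y ^ (θ₁ + θ₂) := by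
    rw [← rpow_add (hF₀pos y hy)]; ring_nf
  rw [intervalIntegral.integral_congr_Ioo_of_le hy.1.le heq,
    intervalIntegral.integral_add (hint₁.const_mul _) (hint₂.const_mul _),
    intervalIntegral.integral_const_mul, intervalIntegral.integral_const_mul, hval₁, hval₂]
  have hden : θ₁ + θ₂ - θ₁' ≠ 0 := sub_ne_zero.2 hθ
  simp only [κ]
  field_simp
  linear_combination θ₂ * (θ₁ + θ₂) * hrpow

theorem integral_integral_dprh_strip
    (hderiv : ∀ y ∈ Ioo a b, HasDerivAt F₀ (f₀ y) y) (hf₀ : ∀ y ∈ Ioo a b, 0 ≤ f₀ y)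
    (hF₀pos : ∀ y ∈ Ioo a b, 0 < F₀ y) (hFa : Tendsto F₀ (𝓝[>] a) (𝓝 0))
    (hFb : Tendsto F₀ (𝓝[<] b) (𝓝 1)) (hs : 0 < θ₁ + θ₂) {y : ℝ} (hy : y ∈ Ioo a b) :
    IntervalIntegrable (fun u => ∫ v in a..y, dprh a b F₀ f₀ θ₁ θ₂ θ₁' (θ₁ + θ₂) u v) volume y b ∧
      ∫ u in y..b, ∫ v in a..y, dprh a b F₀ f₀ θ₁ θ₂ θ₁' (θ₁ + θ₂) u v =
        -(θ₁ * F₀ y ^ (θ₁ + θ₂) * log (F₀ y)) := by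
  have heq : EqOn (fun u => ∫ v in a..y, dprh a b F₀ f₀ θ₁ θ₂ θ₁' (θ₁ + θ₂) u v)
      (fun u => θ₁ * F₀ y ^ (θ₁ + θ₂) * (f₀ u / F₀ u)) (Ioo y b) := fun u hu => by
    dsimp only
    rw [(integral_dprh_of_le hderiv hf₀ hF₀pos hFa hs hy.1 hu.1.le hu.2).2,
      show θ₁ + θ₂ - (θ₁ + θ₂) - 1 = (-1 : ℝ) by ring, rpow_neg_one, div_eq_mul_inv]
  have hsub : Ioo y b ⊆ Ioo a b := Ioo_subset_Ioo_left hy.1.le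
  obtain ⟨hint, hval⟩ := integral_div_of_tendsto hy.2 (fun x hx => hderiv x (hsub hx))
    (fun x hx => hf₀ x (hsub hx)) (fun x hx => hF₀pos x (hsub hx))
    (hderiv y hy).continuousAt.continuousWithinAt hFb (hF₀pos y hy).ne' one_ne_zero
  refine ⟨(intervalIntegrable_congr_uIoo (uIoo_of_le hy.2.le ▸ heq)).2 (hint.const_mul _), ?_⟩
  rw [intervalIntegral.integral_congr_Ioo_of_le hy.2.le heq, intervalIntegral.integral_const_mul,
    hval, log_one]
  ring

theorem dprh_marginal_snd
    (hderiv : ∀ y ∈ Ioo a b, HasDerivAt F₀ (f₀ y) y) (hf₀ : ∀ y ∈ Ioo a b, 0 ≤ f₀ y)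
    (hF₀pos : ∀ y ∈ Ioo a b, 0 < F₀ y) (hFa : Tendsto F₀ (𝓝[>] a) (𝓝 0))
    (hFb : Tendsto F₀ (𝓝[<] b) (𝓝 1)) (hθ₁' : 0 < θ₁') (hs : 0 < θ₁ + θ₂)
    (hθ : θ₁ + θ₂ ≠ θ₁') {y : ℝ} (hy : y ∈ Ioo a b) :
    ∫ u in a..b, ∫ v in a..y, dprh a b F₀ f₀ θ₁ θ₂ θ₁' (θ₁ + θ₂) u v =
      F₀ y ^ (θ₁ + θ₂) * (1 - θ₁ * log (F₀ y)) := by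
  obtain ⟨hint₁, hval₁⟩ := integral_integral_dprh_square hderiv hf₀ hF₀pos hFa hθ₁' hs hθ hy
  obtain ⟨hint₂, hval₂⟩ := integral_integral_dprh_strip hderiv hf₀ hF₀pos hFa hFb hs hy
  rw [← intervalIntegral.integral_add_adjacent_intervals hint₁ hint₂, hval₁, hval₂]
  ring

end DPRH

theorem dprh_marginals_case3_general
    (a b : ℝ) (F₀ f₀ : ℝ → ℝ)
    (hderiv : ∀ y ∈ Ioo a b, HasDerivAt F₀ (f₀ y) y)
    (hf₀pos : ∀ y ∈ Ioo a b, 0 < f₀ y)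
    (hF₀pos : ∀ y ∈ Ioo a b, 0 < F₀ y)
    (hFa : Filter.Tendsto F₀ (nhdsWithin a (Ioi a)) (nhds 0))
    (hFb : Filter.Tendsto F₀ (nhdsWithin b (Iio b)) (nhds 1))
    (θ₁ θ₂ θ₁' θ₂' : ℝ) (hθ₁' : 0 < θ₁') (hθ₂' : 0 < θ₂')
    (hne₁ : θ₁ + θ₂ ≠ θ₁') (heq₂ : θ₁ + θ₂ = θ₂')
    :
    (∀ y₁ ∈ Ioo a b,
      (∫ u in a..y₁, ∫ v in a..b, dprh a b F₀ f₀ θ₁ θ₂ θ₁' θ₂' u v) =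
        θ₂ / (θ₁ + θ₂ - θ₁') * F₀ y₁ ^ θ₁' +
          (θ₁ - θ₁') / (θ₁ + θ₂ - θ₁') * F₀ y₁ ^ (θ₁ + θ₂)) ∧
    (∀ y₂ ∈ Ioo a b,
      (∫ u in a..b, ∫ v in a..y₂, dprh a b F₀ f₀ θ₁ θ₂ θ₁' θ₂' u v) =
        F₀ y₂ ^ (θ₁ + θ₂) * (1 - θ₁ * Real.log (F₀ y₂))) := by
  subst heq₂
  have hf₀ : ∀ y ∈ Ioo a b, 0 ≤ f₀ y := fun y hy => (hf₀pos y hy).le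
  exact ⟨fun y hy => dprh_marginal_fst hderiv hf₀ hF₀pos hFa hFb hθ₁' hθ₂' hne₁ hy,
    fun y hy => dprh_marginal_snd hderiv hf₀ hF₀pos hFa hFb hθ₁' hθ₂' hne₁ hy⟩

theorem dprh_marginals_case3
    (a b : ℝ) (hab : a < b) (F₀ f₀ : ℝ → ℝ)
    (hderiv : ∀ y ∈ Ioo a b, HasDerivAt F₀ (f₀ y) y)
    (hf₀cont : ContinuousOn f₀ (Ioo a b))
    (hmono : StrictMonoOn F₀ (Ioo a b))
    (hf₀pos : ∀ y ∈ Ioo a b, 0 < f₀ y)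
    (hF₀pos : ∀ y ∈ Ioo a b, 0 < F₀ y)
    (hF₀lt1 : ∀ y ∈ Ioo a b, F₀ y < 1)
    (hFa : Filter.Tendsto F₀ (nhdsWithin a (Ioi a)) (nhds 0))
    (hFb : Filter.Tendsto F₀ (nhdsWithin b (Iio b)) (nhds 1))
    (θ₁ θ₂ θ₁' θ₂' : ℝ) (hθ₁ : 0 < θ₁) (hθ₂ : 0 < θ₂) (hθ₁' : 0 < θ₁') (hθ₂' : 0 < θ₂')
    (hne₁ : θ₁ + θ₂ ≠ θ₁') (heq₂ : θ₁ + θ₂ = θ₂')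
    :
    (∀ y₁ ∈ Ioo a b,
      (∫ u in a..y₁, ∫ v in a..b, dprh a b F₀ f₀ θ₁ θ₂ θ₁' θ₂' u v) =
        θ₂ / (θ₁ + θ₂ - θ₁') * F₀ y₁ ^ θ₁' +
          (θ₁ - θ₁') / (θ₁ + θ₂ - θ₁') * F₀ y₁ ^ (θ₁ + θ₂)) ∧
    (∀ y₂ ∈ Ioo a b,
      (∫ u in a..b, ∫ v in a..y₂, dprh a b F₀ f₀ θ₁ θ₂ θ₁' θ₂' u v) =
        F₀ y₂ ^ (θ₁ + θ₂) * (1 - θ₁ * Real.log (F₀ y₂))) :=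
  dprh_marginals_case3_general a b F₀ f₀ hderiv hf₀pos hF₀pos hFa hFb θ₁ θ₂ θ₁' θ₂' hθ₁' hθ₂' hne₁
    heq₂
end

section
/- (Identifiability.) Let θ₁, θ₂, θ₁′, θ₂′ > 0 and β₁, β₂, β₁′, β₂′ > 0 be two parameter vectors, and let f_Θ and f_B denote the corresponding DPRH densities with the same baseline F₀. If f_Θ(y₁,y₂) = f_B(y₁,y₂) for all y₁, y₂ ∈ (a,b) with y₁ ≠ y₂, then θ₁ = β₁, θ₂ = β₂, θ₁′ = β₁′ and θ₂′ = β₂′. -/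
open MeasureTheory Set

theorem dprh_identifiable
    (a b : ℝ) (hab : a < b) (F₀ f₀ : ℝ → ℝ)
    (hderiv : ∀ y ∈ Ioo a b, HasDerivAt F₀ (f₀ y) y)
    (hf₀cont : ContinuousOn f₀ (Ioo a b))
    (hmono : StrictMonoOn F₀ (Ioo a b))
    (hf₀pos : ∀ y ∈ Ioo a b, 0 < f₀ y)
    (hF₀pos : ∀ y ∈ Ioo a b, 0 < F₀ y)
    (hF₀lt1 : ∀ y ∈ Ioo a b, F₀ y < 1)
    (hFa : Filter.Tendsto F₀ (nhdsWithin a (Ioi a)) (nhds 0))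
    (hFb : Filter.Tendsto F₀ (nhdsWithin b (Iio b)) (nhds 1))
    (θ₁ θ₂ θ₁' θ₂' : ℝ) (hθ₁ : 0 < θ₁) (hθ₂ : 0 < θ₂) (hθ₁' : 0 < θ₁') (hθ₂' : 0 < θ₂')
    (β₁ β₂ β₁' β₂' : ℝ) (hβ₁ : 0 < β₁) (hβ₂ : 0 < β₂) (hβ₁' : 0 < β₁') (hβ₂' : 0 < β₂')
    (heq : ∀ y₁ ∈ Ioo a b, ∀ y₂ ∈ Ioo a b, y₁ ≠ y₂ →
      dprh a b F₀ f₀ θ₁ θ₂ θ₁' θ₂' y₁ y₂ = dprh a b F₀ f₀ β₁ β₂ β₁' β₂' y₁ y₂)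
    :
    θ₁ = β₁ ∧ θ₂ = β₂ ∧ θ₁' = β₁' ∧ θ₂' = β₂' := by
  -- surjectivity of F₀ onto (0,1)
  have hsurj : ∀ t ∈ Ioo (0:ℝ) 1, ∃ y ∈ Ioo a b, F₀ y = t := by
    intro t ht
    have hcont : ContinuousOn F₀ (Ioo a b) := fun y hy =>
      (hderiv y hy).continuousAt.continuousWithinAt
    have hmem1 : Ioo a b ∈ nhdsWithin a (Ioi a) := Ioo_mem_nhdsGT_of_mem ⟨le_refl a, hab⟩
    have hmem2 : Ioo a b ∈ nhdsWithin b (Iio b) := Ioo_mem_nhdsLT_of_mem ⟨hab, le_refl b⟩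
    have h1 : ∀ᶠ y in nhdsWithin a (Ioi a), F₀ y < t := hFa.eventually (eventually_lt_nhds ht.1)
    have h2 : ∀ᶠ y in nhdsWithin b (Iio b), t < F₀ y := hFb.eventually (eventually_gt_nhds ht.2)
    obtain ⟨y₁, hy₁t, hy₁⟩ := (h1.and (Filter.eventually_mem_set.2 hmem1)).exists
    obtain ⟨y₂, hy₂t, hy₂⟩ := (h2.and (Filter.eventually_mem_set.2 hmem2)).exists
    have hlt : y₁ < y₂ := by
      by_contra h
      exact absurd (hmono.monotoneOn hy₂ hy₁ (not_lt.1 h)) (by linarith)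
    obtain ⟨y, hy, hFy⟩ := intermediate_value_Icc hlt.le
      (hcont.mono (Icc_subset_Ioo hy₁.1 hy₂.2)) ⟨hy₁t.le, hy₂t.le⟩
    exact ⟨y, ⟨lt_of_lt_of_le hy₁.1 hy.1, lt_of_le_of_lt hy.2 hy₂.2⟩, hFy⟩
  -- functional equations on (0,1)
  have hE : ∀ u v : ℝ, 0 < u → u < v → v < 1 →
      (θ₁' * θ₂ * u ^ (θ₁' - 1) * v ^ (θ₁ + θ₂ - θ₁' - 1)
        = β₁' * β₂ * u ^ (β₁' - 1) * v ^ (β₁ + β₂ - β₁' - 1)) ∧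
      (θ₁ * θ₂' * v ^ (θ₁ + θ₂ - θ₂' - 1) * u ^ (θ₂' - 1)
        = β₁ * β₂' * v ^ (β₁ + β₂ - β₂' - 1) * u ^ (β₂' - 1)) := by
    intro u v hu huv hv1
    obtain ⟨yu, hyu, hFu⟩ := hsurj u ⟨hu, huv.trans hv1⟩
    obtain ⟨yv, hyv, hFv⟩ := hsurj v ⟨hu.trans huv, hv1⟩
    have hylt : yu < yv := by
      by_contra h
      exact absurd (hmono.monotoneOn hyv hyu (not_lt.1 h)) (by rw [hFu, hFv]; linarith)
    have hfu : f₀ yu ≠ 0 := (hf₀pos yu hyu).ne'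
    have hfv : f₀ yv ≠ 0 := (hf₀pos yv hyv).ne'
    constructor
    · have h := heq yu hyu yv hyv hylt.ne
      rw [dprh, dprh, if_pos ⟨hyu.1, hylt, hyv.2⟩, if_pos ⟨hyu.1, hylt, hyv.2⟩, hFu, hFv] at h
      have h2 : (θ₁' * θ₂ * u ^ (θ₁' - 1) * v ^ (θ₁ + θ₂ - θ₁' - 1)) * (f₀ yu * f₀ yv)
          = (β₁' * β₂ * u ^ (β₁' - 1) * v ^ (β₁ + β₂ - β₁' - 1)) * (f₀ yu * f₀ yv) := by
        linear_combination h
      exact mul_right_cancel₀ (mul_ne_zero hfu hfv) h2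
    · have h := heq yv hyv yu hyu hylt.ne'
      rw [dprh, dprh] at h
      have hnot : ¬ (a < yv ∧ yv < yu ∧ yu < b) := fun h' => absurd h'.2.1 (asymm hylt)
      have hpos2 : a < yu ∧ yu < yv ∧ yv < b := ⟨hyu.1, hylt, hyv.2⟩
      rw [if_neg hnot, if_neg hnot, if_pos hpos2, if_pos hpos2, hFu, hFv] at h
      have h2 : (θ₁ * θ₂' * v ^ (θ₁ + θ₂ - θ₂' - 1) * u ^ (θ₂' - 1)) * (f₀ yv * f₀ yu)
          = (β₁ * β₂' * v ^ (β₁ + β₂ - β₂' - 1) * u ^ (β₂' - 1)) * (f₀ yv * f₀ yu) := by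
        linear_combination h
      exact mul_right_cancel₀ (mul_ne_zero hfv hfu) h2
  -- logarithmic form
  have hlog : ∀ r s : ℝ, r < s → s < 0 →
      (Real.log θ₁' + Real.log θ₂ + r * (θ₁' - 1) + s * (θ₁ + θ₂ - θ₁' - 1)
        = Real.log β₁' + Real.log β₂ + r * (β₁' - 1) + s * (β₁ + β₂ - β₁' - 1)) ∧
      (Real.log θ₁ + Real.log θ₂' + s * (θ₁ + θ₂ - θ₂' - 1) + r * (θ₂' - 1)
        = Real.log β₁ + Real.log β₂' + s * (β₁ + β₂ - β₂' - 1) + r * (β₂' - 1)) := by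
    intro r s hrs hs0
    have hu : (0:ℝ) < Real.exp r := Real.exp_pos r
    have huv : Real.exp r < Real.exp s := Real.exp_lt_exp.2 hrs
    have hv1 : Real.exp s < 1 := by
      simpa using Real.exp_lt_exp.2 hs0
    obtain ⟨h1, h2⟩ := hE (Real.exp r) (Real.exp s) hu huv hv1
    have hrw : ∀ (x p : ℝ), Real.exp x ^ p = Real.exp (x * p) := by
      intro x p
      rw [Real.rpow_def_of_pos (Real.exp_pos x), Real.log_exp]
    rw [hrw, hrw, hrw, hrw] at h1 h2
    constructor
    · apply Real.exp_injective
      rw [Real.exp_add, Real.exp_add, Real.exp_add, Real.exp_add, Real.exp_add, Real.exp_add,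
        Real.exp_log hθ₁', Real.exp_log hθ₂, Real.exp_log hβ₁', Real.exp_log hβ₂]
      linear_combination h1
    · apply Real.exp_injective
      rw [Real.exp_add, Real.exp_add, Real.exp_add, Real.exp_add, Real.exp_add, Real.exp_add,
        Real.exp_log hθ₁, Real.exp_log hθ₂', Real.exp_log hβ₁, Real.exp_log hβ₂']
      linear_combination h2
  have e1 := (hlog (-2) (-1) (by norm_num) (by norm_num)).1
  have e2 := (hlog (-3) (-1) (by norm_num) (by norm_num)).1
  have e3 := (hlog (-3) (-2) (by norm_num) (by norm_num)).1
  have f1 := (hlog (-2) (-1) (by norm_num) (by norm_num)).2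
  have f2 := (hlog (-3) (-1) (by norm_num) (by norm_num)).2
  have hθ₁'β : θ₁' = β₁' := by linarith
  have hsum : θ₁ + θ₂ = β₁ + β₂ := by linarith
  have hθ₂'β : θ₂' = β₂' := by linarith
  have hlogθ₂ : Real.log θ₂ = Real.log β₂ := by
    rw [hθ₁'β] at e1; linarith
  have hθ₂β : θ₂ = β₂ := by
    rw [← Real.exp_log hθ₂, ← Real.exp_log hβ₂, hlogθ₂]
  refine ⟨by linarith, hθ₂β, hθ₁'β, hθ₂'β⟩
end
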